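/- For every process term P there exists an F-normal form N such that P = N is derivable from the axioms A1–A4, L1–L5, C1–C7, P1 together with the axiom F: x | y = 0, and moreover h(P) ≥ h(N). -/
import Mathlib


/-- A partial communication function: `γ a b = some c` means communication of
`a` and `b` is defined with result `c` (where `c : Option A`, `none` meaning τ). -/
abbrev Comm (A : Type) := A → A → Option (Option A)

/-- Open process terms, with variables indexed by ℕ. -/
inductive PT (A : Type) : Type where
  | var : ℕ → PT A
  | nil : PT A
  | pre : Option A → PT A → PT A
  | add : PT A → PT A → PT A
  | lmerge : PT A → PT A → PT A
  | cmerge : PT A → PT A → PT A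
  | par : PT A → PT A → PT A

/-- Substitution on open terms. -/
def substPT {A : Type} (σ : ℕ → PT A) : PT A → PT A
  | .var x => σ x
  | .nil => .nil
  | .pre α P => .pre α (substPT σ P)
  | .add P Q => .add (substPT σ P) (substPT σ Q)
  | .lmerge P Q => .lmerge (substPT σ P) (substPT σ Q)
  | .cmerge P Q => .cmerge (substPT σ P) (substPT σ Q)
  | .par P Q => .par (substPT σ P) (substPT σ Q)

/-- Derivability in equational logic from a set of axioms `Ax`. -/
inductive Deriv {A : Type} (Ax : PT A → PT A → Prop) : PT A → PT A → Prop where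
  | ax {P Q : PT A} (σ : ℕ → PT A) : Ax P Q → Deriv Ax (substPT σ P) (substPT σ Q)
  | refl (P : PT A) : Deriv Ax P P
  | symm {P Q} : Deriv Ax P Q → Deriv Ax Q P
  | trans {P Q R} : Deriv Ax P Q → Deriv Ax Q R → Deriv Ax P R
  | pre (α) {P Q} : Deriv Ax P Q → Deriv Ax (.pre α P) (.pre α Q)
  | add {P P' Q Q'} : Deriv Ax P P' → Deriv Ax Q Q' → Deriv Ax (.add P Q) (.add P' Q')
  | lmerge {P P' Q Q'} : Deriv Ax P P' → Deriv Ax Q Q' → Deriv Ax (.lmerge P Q) (.lmerge P' Q')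
  | cmerge {P P' Q Q'} : Deriv Ax P P' → Deriv Ax Q Q' → Deriv Ax (.cmerge P Q) (.cmerge P' Q')
  | par {P P' Q Q'} : Deriv Ax P P' → Deriv Ax Q Q' → Deriv Ax (.par P Q) (.par P' Q')

/-- The height measure on process terms. -/
def height {A : Type} : PT A → ℕ
  | .var _ => 1
  | .nil => 0
  | .pre _ P => height P + 1
  | .add P Q => max (height P) (height Q)
  | .lmerge P Q => height P + height Q
  | .cmerge P Q => height P + height Q
  | .par P Q => height P + height Q

/-- A term is simple if it is not 0 and not an alternative composition. -/
def SimplePT {A : Type} : PT A → Prop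
  | .nil => False
  | .add _ _ => False
  | _ => True

/-- Summation of a list of terms (the empty summation is 0). -/
def listSum {A : Type} (l : List (PT A)) : PT A := l.foldr .add .nil

/-- The axioms A1–A4, L1–L5, C1–C7 and P1 of Table 2. -/
inductive CcsAx {A : Type} (γ : Comm A) : PT A → PT A → Prop where
  | A1 : CcsAx γ (.add (.var 0) (.var 1)) (.add (.var 1) (.var 0))
  | A2 : CcsAx γ (.add (.add (.var 0) (.var 1)) (.var 2)) (.add (.var 0) (.add (.var 1) (.var 2)))
  | A3 : CcsAx γ (.add (.var 0) (.var 0)) (.var 0)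
  | A4 : CcsAx γ (.add (.var 0) .nil) (.var 0)
  | L1 : CcsAx γ (.lmerge .nil (.var 0)) .nil
  | L2 (α : Option A) : CcsAx γ (.lmerge (.pre α (.var 0)) (.var 1)) (.pre α (.par (.var 0) (.var 1)))
  | L3 : CcsAx γ (.lmerge (.add (.var 0) (.var 1)) (.var 2))
      (.add (.lmerge (.var 0) (.var 2)) (.lmerge (.var 1) (.var 2)))
  | L4 : CcsAx γ (.lmerge (.lmerge (.var 0) (.var 1)) (.var 2)) (.lmerge (.var 0) (.par (.var 1) (.var 2)))
  | L5 : CcsAx γ (.lmerge (.var 0) .nil) (.var 0)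
  | C1 : CcsAx γ (.cmerge .nil (.var 0)) .nil
  | C2 {a b : A} {c : Option A} : γ a b = some c →
      CcsAx γ (.cmerge (.pre (some a) (.var 0)) (.pre (some b) (.var 1))) (.pre c (.par (.var 0) (.var 1)))
  | C3 {a b : A} : γ a b = none →
      CcsAx γ (.cmerge (.pre (some a) (.var 0)) (.pre (some b) (.var 1))) .nil
  | C4 : CcsAx γ (.cmerge (.add (.var 0) (.var 1)) (.var 2))
      (.add (.cmerge (.var 0) (.var 2)) (.cmerge (.var 1) (.var 2)))
  | C5 : CcsAx γ (.cmerge (.var 0) (.var 1)) (.cmerge (.var 1) (.var 0))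
  | C6 : CcsAx γ (.cmerge (.cmerge (.var 0) (.var 1)) (.var 2)) (.cmerge (.var 0) (.cmerge (.var 1) (.var 2)))
  | C7 : CcsAx γ (.cmerge (.lmerge (.var 0) (.var 1)) (.var 2)) (.lmerge (.cmerge (.var 0) (.var 2)) (.var 1))
  | P1 : CcsAx γ (.par (.var 0) (.var 1))
      (.add (.add (.lmerge (.var 0) (.var 1)) (.lmerge (.var 1) (.var 0))) (.cmerge (.var 0) (.var 1)))

/-- The axioms of Table 2 together with F : x | y = 0. -/
inductive FAx {A : Type} (γ : Comm A) : PT A → PT A → Prop where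
  | base {P Q} : CcsAx γ P Q → FAx γ P Q
  | F : FAx γ (.cmerge (.var 0) (.var 1)) .nil

/-- F-normal forms:  N ::= 0 | N + N | α.N | x ⌊ N. -/
inductive IsFNF {A : Type} : PT A → Prop where
  | nil : IsFNF .nil
  | add {N₁ N₂ : PT A} : IsFNF N₁ → IsFNF N₂ → IsFNF (.add N₁ N₂)
  | pre (α : Option A) {N : PT A} : IsFNF N → IsFNF (.pre α N)
  | lmerge (x : ℕ) {N : PT A} : IsFNF N → IsFNF (.lmerge (.var x) N)

/-- The width of an F-normal form. -/
def fwidth {A : Type} : PT A → ℕ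
  | .add N₁ N₂ => fwidth N₁ + fwidth N₂
  | .pre _ N => max (fwidth N) 1
  | .lmerge _ N => max (fwidth N) 1
  | _ => 0

section Aux

variable {A : Type} (γ : Comm A)

private def σ2 (P Q : PT A) : ℕ → PT A
  | 0 => P
  | _ => Q

private lemma dL1 (M : PT A) : Deriv (FAx γ) (.lmerge .nil M) .nil := by
  simpa [substPT, σ2] using Deriv.ax (σ2 M M) (FAx.base CcsAx.L1)

private lemma dL2 (α : Option A) (P Q : PT A) :
    Deriv (FAx γ) (.lmerge (.pre α P) Q) (.pre α (.par P Q)) := by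
  simpa [substPT, σ2] using Deriv.ax (σ2 P Q) (FAx.base (CcsAx.L2 α))

private def σ3 (P Q R : PT A) : ℕ → PT A
  | 0 => P
  | 1 => Q
  | _ => R

private lemma dL3 (P Q R : PT A) :
    Deriv (FAx γ) (.lmerge (.add P Q) R) (.add (.lmerge P R) (.lmerge Q R)) := by
  simpa [substPT, σ3] using Deriv.ax (σ3 P Q R) (FAx.base CcsAx.L3)

private lemma dL4 (P Q R : PT A) :
    Deriv (FAx γ) (.lmerge (.lmerge P Q) R) (.lmerge P (.par Q R)) := by
  simpa [substPT, σ3] using Deriv.ax (σ3 P Q R) (FAx.base CcsAx.L4)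

private lemma dL5 (P : PT A) : Deriv (FAx γ) (.lmerge P .nil) P := by
  simpa [substPT, σ2] using Deriv.ax (σ2 P P) (FAx.base CcsAx.L5)

private lemma dF (P Q : PT A) : Deriv (FAx γ) (.cmerge P Q) .nil := by
  simpa [substPT, σ2] using Deriv.ax (σ2 P Q) (FAx.F)

private lemma dP1 (P Q : PT A) :
    Deriv (FAx γ) (.par P Q)
      (.add (.add (.lmerge P Q) (.lmerge Q P)) (.cmerge P Q)) := by
  simpa [substPT, σ2] using Deriv.ax (σ2 P Q) (FAx.base CcsAx.P1)

private lemma key (n : ℕ) : ∀ N M : PT A, IsFNF N → IsFNF M →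
    height N + height M ≤ n →
    (∃ K : PT A, IsFNF K ∧ Deriv (FAx γ) (.lmerge N M) K ∧
        height K ≤ height N + height M) ∧
    (∃ K : PT A, IsFNF K ∧ Deriv (FAx γ) (.par N M) K ∧
        height K ≤ height N + height M) := by
  induction n using Nat.strong_induction_on with
  | _ n IH =>
    have L : ∀ N M : PT A, IsFNF N → IsFNF M → height N + height M ≤ n →
        ∃ K : PT A, IsFNF K ∧ Deriv (FAx γ) (.lmerge N M) K ∧
          height K ≤ height N + height M := by
      intro N M hN hM
      induction hN with
      | nil =>
        intro _
        exact ⟨.nil, IsFNF.nil, dL1 γ M, by simp [height]⟩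
      | add h1 h2 ih1 ih2 =>
        rename_i N₁ N₂
        intro hle
        obtain ⟨K₁, hK₁, d₁, b₁⟩ := ih1 (le_trans (by
          simp only [height]; gcongr; exact le_max_left _ _) hle)
        obtain ⟨K₂, hK₂, d₂, b₂⟩ := ih2 (le_trans (by
          simp only [height]; gcongr; exact le_max_right _ _) hle)
        refine ⟨.add K₁ K₂, IsFNF.add hK₁ hK₂,
          Deriv.trans (dL3 γ N₁ N₂ M) (Deriv.add d₁ d₂), ?_⟩
        simp only [height] at *
        omega
      | pre α h ih =>
        rename_i N'
        intro hle
        have hlt : height N' + height M < n := by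
          simp only [height] at hle; omega
        obtain ⟨-, K, hK, d, b⟩ :=
          (IH _ hlt N' M h hM le_rfl)
        refine ⟨.pre α K, IsFNF.pre α hK,
          Deriv.trans (dL2 γ α N' M) (Deriv.pre α d), ?_⟩
        simp only [height]; omega
      | lmerge x h ih =>
        rename_i N'
        intro hle
        have hlt : height N' + height M < n := by
          simp only [height] at hle; omega
        obtain ⟨-, K, hK, d, b⟩ := (IH _ hlt N' M h hM le_rfl)
        refine ⟨.lmerge (.var x) K, IsFNF.lmerge x hK,
          Deriv.trans (dL4 γ (.var x) N' M)
            (Deriv.lmerge (Deriv.refl _) d), ?_⟩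
        simp only [height]; omega
    intro N M hN hM hle
    refine ⟨L N M hN hM hle, ?_⟩
    obtain ⟨K₁, hK₁, d₁, b₁⟩ := L N M hN hM hle
    obtain ⟨K₂, hK₂, d₂, b₂⟩ := L M N hM hN (by omega)
    refine ⟨.add (.add K₁ K₂) .nil,
      IsFNF.add (IsFNF.add hK₁ hK₂) IsFNF.nil,
      Deriv.trans (dP1 γ N M)
        (Deriv.add (Deriv.add d₁ d₂) (dF γ N M)), ?_⟩
    simp only [height]; omega

end Aux

/-- Every process term is provably (from Table 2 plus F) equal to an
F-normal form of no greater height. -/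
theorem exists_fnf {A : Type} (γ : Comm A) (P : PT A) :
    ∃ N : PT A, IsFNF N ∧ Deriv (FAx γ) P N ∧ height N ≤ height P := by
  induction P with
  | var x =>
    exact ⟨.lmerge (.var x) .nil, IsFNF.lmerge x IsFNF.nil,
      Deriv.symm (dL5 γ (.var x)), by simp [height]⟩
  | nil => exact ⟨.nil, IsFNF.nil, Deriv.refl _, le_rfl⟩
  | pre α P ih =>
    obtain ⟨N, hN, d, b⟩ := ih
    exact ⟨.pre α N, IsFNF.pre α hN, Deriv.pre α d, by
      simp only [height]; omega⟩
  | add P Q ihP ihQ =>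
    obtain ⟨N, hN, dN, bN⟩ := ihP
    obtain ⟨M, hM, dM, bM⟩ := ihQ
    exact ⟨.add N M, IsFNF.add hN hM, Deriv.add dN dM, by
      simp only [height]; omega⟩
  | lmerge P Q ihP ihQ =>
    obtain ⟨N, hN, dN, bN⟩ := ihP
    obtain ⟨M, hM, dM, bM⟩ := ihQ
    obtain ⟨K, hK, d, b⟩ :=
      (key γ (height N + height M) N M hN hM le_rfl).1
    exact ⟨K, hK, Deriv.trans (Deriv.lmerge dN dM) d, by
      simp only [height] at *; omega⟩
  | cmerge P Q ihP ihQ =>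
    exact ⟨.nil, IsFNF.nil, dF γ P Q, by simp [height]⟩
  | par P Q ihP ihQ =>
    obtain ⟨N, hN, dN, bN⟩ := ihP
    obtain ⟨M, hM, dM, bM⟩ := ihQ
    obtain ⟨K, hK, d, b⟩ :=
      (key γ (height N + height M) N M hN hM le_rfl).2
    exact ⟨K, hK, Deriv.trans (Deriv.par dN dM) d, by
      simp only [height] at *; omega⟩
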